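/- arXiv:2512.08602 — 3 statements merged into one kernel-verified Lean document; each statement's English description precedes it below -/
import Mathlib

section
/- Let F_{q_0} ⊆ F_q ⊆ F_{q^s} be finite fields with q = q_0^r, let T be a subgroup of F_{q_0}^*, and let d be a divisor of s. Then the number of elements α ∈ F_{q^d}^* ⊆ F_{q^s}^* satisfying N_{F_{q^s}/F_{q_0}}(α) ∈ T equals ((q^d - 1)·|T|/(q_0 - 1)) · gcd(s/d, (q_0 - 1)/|T|). -/
/-!
On `F_{q^d}` the norm to `F_{q_0}` is `α ↦ α ^ (k s/d)` with `k = (q^d - 1)/(q_0 - 1)`, and in the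
cyclic group `F_{q_0}^*` the subgroup `T` is exactly the set of solutions of `x ^ |T| = 1`. So the
condition reads `α ^ (k (s/d) |T|) = 1` in the cyclic group `F_{q^d}^*` of order `k (q_0 - 1)`,
which has `gcd (k (q_0 - 1), k (s/d) |T|) = k |T| gcd (s/d, (q_0 - 1)/|T|)` solutions.
-/

open Module

namespace IsCyclic

variable {G : Type*} [CommGroup G] [IsCyclic G] [Finite G]

theorem ker_powMonoidHom_natCard (H : Subgroup G) :
    (powMonoidHom (Nat.card H) : G →* G).ker = H := by
  refine (Subgroup.eq_of_le_of_card_ge (fun x hx => ?_) ?_).symm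
  · exact congrArg Subtype.val (pow_card_eq_one' : (⟨x, hx⟩ : H) ^ Nat.card H = 1)
  · rw [card_powMonoidHom_ker, Nat.gcd_eq_right (Subgroup.card_subgroup_dvd_card H)]

theorem mem_iff_pow_natCard_eq_one (H : Subgroup G) {x : G} : x ∈ H ↔ x ^ Nat.card H = 1 := by
  conv_lhs => rw [← ker_powMonoidHom_natCard H]
  rfl

theorem natCard_pow_eq_one (n : ℕ) : Nat.card {x : G // x ^ n = 1} = (Nat.card G).gcd n :=
  card_powMonoidHom_ker G n

end IsCyclic

theorem Nat.gcd_div_mul_mul_mul_eq {N m t : ℕ} (n : ℕ) (hm : m ∣ N) (ht : t ∣ m) :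
    N.gcd (N / m * n * t) * m = N * t * n.gcd (m / t) := by
  obtain ⟨k, rfl⟩ := hm
  obtain ⟨u, rfl⟩ := ht
  rcases Nat.eq_zero_or_pos (t * u) with h | h
  · simp [h]
  · have ht : 0 < t := Nat.pos_of_mul_pos_right h
    rw [Nat.mul_div_cancel_left _ h, Nat.mul_div_cancel_left _ ht,
      show t * u * k = k * t * u by ring, show k * n * t = k * t * n by ring, Nat.gcd_mul_left,
      Nat.gcd_comm]
    ring

namespace FiniteField

variable {K M L : Type*} [Field K] [Field M] [Field L] [Finite M] [Algebra K M] [Algebra M L]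
  [Algebra K L] [IsScalarTower K M L]

theorem algebraMap_norm_algebraMap_eq_pow (x : M) :
    algebraMap K M (Algebra.norm K (algebraMap M L x)) =
      x ^ ((Nat.card M - 1) / (Nat.card K - 1) * finrank M L) := by
  rw [← Algebra.norm_norm (S := M), Algebra.norm_algebraMap, map_pow, map_pow,
    algebraMap_norm_eq_pow, pow_mul]

theorem unitsMap_norm_algebraMap_mem_iff (T : Subgroup Kˣ) (α : Mˣ) :
    Units.map ((Algebra.norm K : L →* K).comp (algebraMap M L : M →+* L).toMonoidHom) α ∈ T ↔
      α ^ ((Nat.card M - 1) / (Nat.card K - 1) * finrank M L * Nat.card T) = 1 := by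
  have : Finite K := Finite.of_injective _ (algebraMap K M).injective
  rw [IsCyclic.mem_iff_pow_natCard_eq_one,
    ← (Units.map_injective (algebraMap K M).injective).eq_iff, map_pow, map_one, Units.ext_iff,
    Units.ext_iff]
  simp [algebraMap_norm_algebraMap_eq_pow, pow_mul]

end FiniteField

theorem stmt_5_general (K0 M L : Type*) [Field K0] [Fintype K0] [Field M] [Fintype M]
    [Field L] [Algebra K0 M] [Algebra M L] [Algebra K0 L]
    [IsScalarTower K0 M L] (T : Subgroup K0ˣ) :
    Nat.card {α : Mˣ //
        Units.map ((Algebra.norm K0 : L →* K0).comp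
          (algebraMap M L : M →+* L).toMonoidHom) α ∈ T} * (Fintype.card K0 - 1) =
      (Fintype.card M - 1) * Nat.card T *
        Nat.gcd (Module.finrank M L) ((Fintype.card K0 - 1) / Nat.card T) := by
  have hunits : Nat.card K0ˣ ∣ Nat.card Mˣ :=
    Subgroup.card_dvd_of_injective _ (Units.map_injective (algebraMap K0 M).injective)
  rw [Nat.card_congr (Equiv.subtypeEquivRight (FiniteField.unitsMap_norm_algebraMap_mem_iff T)),
    IsCyclic.natCard_pow_eq_one, Nat.card_units, ← Fintype.card_eq_nat_card,
    ← Fintype.card_eq_nat_card]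
  refine Nat.gcd_div_mul_mul_mul_eq _ ?_ ?_
  · simpa only [Nat.card_units, Fintype.card_eq_nat_card] using hunits
  · simpa only [Nat.card_units, Fintype.card_eq_nat_card] using Subgroup.card_subgroup_dvd_card T

/-- For finite fields `F_{q_0} ⊆ F_{q^d} ⊆ F_{q^s}` and a subgroup `T ≤ F_{q_0}^*`,
the number of `α ∈ F_{q^d}^*` with `N_{F_{q^s}/F_{q_0}}(α) ∈ T` equals
`((q^d - 1)|T|/(q_0 - 1)) · gcd(s/d, (q_0 - 1)/|T|)`. -/
theorem stmt_5 (K0 M L : Type*) [Field K0] [Fintype K0] [Field M] [Fintype M]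
    [Field L] [Fintype L] [Algebra K0 M] [Algebra M L] [Algebra K0 L]
    [IsScalarTower K0 M L] (T : Subgroup K0ˣ) :
    Nat.card {α : Mˣ //
        Units.map ((Algebra.norm K0 : L →* K0).comp
          (algebraMap M L : M →+* L).toMonoidHom) α ∈ T} * (Fintype.card K0 - 1) =
      (Fintype.card M - 1) * Nat.card T *
        Nat.gcd (Module.finrank M L) ((Fintype.card K0 - 1) / Nat.card T) :=
  stmt_5_general K0 M L T
end

section
/- Let A ⊆ F_{q^s} be a finite set of elements of degree exactly s over F_q with pairwise distinct minimal polynomials, and let 1 ≤ k < |A|. Then the code C = { (a(α))_{α ∈ A} : a ∈ F_q[x], deg a < sk } ⊆ F_{q^s}^{|A|} is an F_q-linear code of cardinality q^{sk} whose minimum Hamming distance equals |A| - k + 1; that is, C is an MDS-like code meeting the Singleton-type bound: every nonzero codeword has Hamming weight at least |A| - k + 1. -/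
/-!
A nonzero `a : K[X]` vanishing on `R ⊆ A` is divisible by `∏ α ∈ R, minpoly K α`: the factors are
monic irreducibles, pairwise distinct and hence pairwise coprime, each of degree `s`. So
`s * #R ≤ a.natDegree < s * k`, i.e. `a` has at most `k - 1` zeros in `A`. This gives the weight
bound, and (applied to a difference, with `k < #A`) injectivity of evaluation on polynomials of
degree `< s * k`, whence `q ^ (s * k)` codewords. The product of the minimal polynomials of any
`k - 1` points of `A` has exactly those zeros in `A`, so the bound is attained.
-/

open Polynomial Finset

theorem mem_degreeLT_iff_natDegree_lt {R : Type*} [Semiring R] {n : ℕ} (hn : n ≠ 0) {p : R[X]} :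
    p ∈ degreeLT R n ↔ p.natDegree < n := by
  rcases eq_or_ne p 0 with rfl | hp
  · simpa using Nat.pos_of_ne_zero hn
  · rw [mem_degreeLT, natDegree_lt_iff_degree_lt hp]

theorem card_setOf_natDegree_lt {R : Type*} [Semiring R] [Fintype R] {n : ℕ} (hn : n ≠ 0) :
    Nat.card {p : R[X] | p.natDegree < n} = Fintype.card R ^ n := by
  have hset : {p : R[X] | p.natDegree < n} = degreeLT R n := by
    ext p; exact (mem_degreeLT_iff_natDegree_lt hn).symm
  rw [hset, SetLike.coe_sort_coe, Nat.card_congr (degreeLTEquiv R n).toEquiv, Nat.card_fun,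
    Nat.card_fin, Nat.card_eq_fintype_card]

section MinpolyProducts

variable {K L : Type*} [Field K] [Field L] [Algebra K L] [Algebra.IsIntegral K L]

theorem minpoly_eq_of_aeval_minpoly_eq_zero {α β : L} (h : aeval α (minpoly K β) = 0) :
    minpoly K α = minpoly K β :=
  (minpoly.eq_of_irreducible_of_monic (minpoly.irreducible (Algebra.IsIntegral.isIntegral β)) h
    (minpoly.monic (Algebra.IsIntegral.isIntegral β))).symm

theorem isCoprime_minpoly_of_ne {α β : L} (h : minpoly K α ≠ minpoly K β) :
    IsCoprime (minpoly K α) (minpoly K β) :=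
  (minpoly.irreducible (Algebra.IsIntegral.isIntegral α)).coprime_iff_not_dvd.mpr fun hdvd =>
    h (minpoly_eq_of_aeval_minpoly_eq_zero (minpoly.dvd_iff.mp hdvd))

theorem prod_minpoly_dvd {R : Finset L} (hR : Set.InjOn (minpoly K) (R : Set L)) {a : K[X]}
    (ha : ∀ α ∈ R, aeval α a = 0) : ∏ α ∈ R, minpoly K α ∣ a :=
  prod_dvd_of_coprime (fun _ hα _ hβ hne => isCoprime_minpoly_of_ne fun h => hne (hR hα hβ h))
    fun α hα => minpoly.dvd K α (ha α hα)

theorem natDegree_prod_minpoly {R : Finset L} {s : ℕ}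
    (hR : ∀ α ∈ R, (minpoly K α).natDegree = s) : (∏ α ∈ R, minpoly K α).natDegree = s * #R := by
  rw [natDegree_prod_of_monic _ _ fun α _ => minpoly.monic (Algebra.IsIntegral.isIntegral α),
    sum_congr rfl hR, sum_const, smul_eq_mul, mul_comm]

variable [DecidableEq L]

theorem mul_card_filter_aeval_eq_zero_le_natDegree {A : Finset L} {s : ℕ}
    (hdeg : ∀ α ∈ A, (minpoly K α).natDegree = s) (hinj : Set.InjOn (minpoly K) (A : Set L))
    {a : K[X]} (ha : a ≠ 0) : s * #(A.filter fun α => aeval α a = 0) ≤ a.natDegree := by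
  set R := A.filter fun α => aeval α a = 0
  have hRA : R ⊆ A := filter_subset _ A
  calc s * #R = (∏ α ∈ R, minpoly K α).natDegree :=
        (natDegree_prod_minpoly fun α hα => hdeg α (hRA hα)).symm
    _ ≤ a.natDegree := natDegree_le_of_dvd
        (prod_minpoly_dvd (hinj.mono (coe_subset.mpr hRA)) fun α hα => (mem_filter.mp hα).2) ha

theorem card_filter_aeval_eq_zero_lt {A : Finset L} {s k : ℕ}
    (hdeg : ∀ α ∈ A, (minpoly K α).natDegree = s) (hinj : Set.InjOn (minpoly K) (A : Set L))
    {a : K[X]} (ha : a ≠ 0) (hdeg_a : a.natDegree < s * k) :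
    #(A.filter fun α => aeval α a = 0) < k :=
  Nat.lt_of_mul_lt_mul_left
    ((mul_card_filter_aeval_eq_zero_le_natDegree hdeg hinj ha).trans_lt hdeg_a)

theorem filter_aeval_prod_minpoly_ne_zero {A B : Finset L} (hBA : B ⊆ A)
    (hinj : Set.InjOn (minpoly K) (A : Set L)) :
    (A.filter fun α => aeval α (∏ β ∈ B, minpoly K β) ≠ 0) = A \ B := by
  ext α
  simp only [mem_filter, mem_sdiff, map_prod, ne_eq, prod_eq_zero_iff, not_exists, not_and]
  refine and_congr_right fun hα => ⟨fun h hαB => h α hαB (minpoly.aeval K α), ?_⟩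
  intro hαB β hβ h
  exact hαB (hinj hα (hBA hβ) (minpoly_eq_of_aeval_minpoly_eq_zero h) ▸ hβ)

theorem eq_zero_of_aeval_eq_zero_of_natDegree_lt {A : Finset L} {s : ℕ}
    (hdeg : ∀ α ∈ A, (minpoly K α).natDegree = s) (hinj : Set.InjOn (minpoly K) (A : Set L))
    {a : K[X]} (hdeg_a : a.natDegree < s * #A) (ha : ∀ α ∈ A, aeval α a = 0) : a = 0 := by
  by_contra ha0
  have hroots := card_filter_aeval_eq_zero_lt hdeg hinj ha0 hdeg_a
  rw [filter_true_of_mem ha] at hroots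
  exact lt_irrefl _ hroots

theorem natCard_evaluation_code [Fintype K] {A : Finset L} {s n : ℕ}
    (hdeg : ∀ α ∈ A, (minpoly K α).natDegree = s) (hinj : Set.InjOn (minpoly K) (A : Set L))
    (hn : n ≠ 0) (hnA : n ≤ s * #A) :
    Nat.card {v : A → L // ∃ a : K[X], a.natDegree < n ∧ ∀ α : A, v α = aeval (α : L) a} =
      Fintype.card K ^ n := by
  set f : K[X] → A → L := fun a α => aeval (α : L) a
  have hf : Set.InjOn f {a | a.natDegree < n} := by
    intro a ha b hb hab
    refine sub_eq_zero.mp (eq_zero_of_aeval_eq_zero_of_natDegree_lt hdeg hinj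
      ((natDegree_sub_le a b).trans_lt (max_lt ha hb) |>.trans_le hnA) fun α hα => ?_)
    rw [map_sub, sub_eq_zero]
    exact congrFun hab ⟨α, hα⟩
  have hcode : ∀ v : A → L, (∃ a : K[X], a.natDegree < n ∧ ∀ α : A, v α = aeval (α : L) a) ↔
      v ∈ f '' {a | a.natDegree < n} := fun v => by
    simp only [Set.mem_image, Set.mem_ofPred_eq, funext_iff, eq_comm, f]
  rw [Nat.card_congr (Equiv.subtypeEquivRight hcode), Nat.card_image_of_injOn hf,
    card_setOf_natDegree_lt hn]

end MinpolyProducts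

theorem stmt_14_general (K L : Type*) [Field K] [Fintype K] [Field L] [Fintype L] [Algebra K L]
    [DecidableEq L] (s k : ℕ)
    (A : Finset L) (hdeg : ∀ α ∈ A, (minpoly K α).natDegree = s)
    (hdist : ∀ α ∈ A, ∀ β ∈ A, α ≠ β → minpoly K α ≠ minpoly K β)
    (hk : 1 ≤ k) (hkA : k < A.card) :
    Nat.card {v : A → L // ∃ a : Polynomial K, a.natDegree < s * k ∧
        ∀ α : A, v α = Polynomial.aeval (α : L) a} = Fintype.card K ^ (s * k) ∧
    (∀ a : Polynomial K, a ≠ 0 → a.natDegree < s * k →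
        A.card - k + 1 ≤ (A.filter fun α => Polynomial.aeval α a ≠ 0).card) ∧
    (∃ a : Polynomial K, a ≠ 0 ∧ a.natDegree < s * k ∧
        (A.filter fun α => Polynomial.aeval α a ≠ 0).card = A.card - k + 1) := by
  have hinj : Set.InjOn (minpoly K) (A : Set L) := fun α hα β hβ h =>
    by_contra fun hne => hdist α hα β hβ hne h
  obtain ⟨α₀, hα₀⟩ : A.Nonempty := card_pos.mp (by omega)
  have hs : 0 < s := hdeg α₀ hα₀ ▸ minpoly.natDegree_pos (Algebra.IsIntegral.isIntegral α₀)
  refine ⟨natCard_evaluation_code hdeg hinj (by positivity) (Nat.mul_le_mul_left s hkA.le),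
    fun a ha hdeg_a => ?_, ?_⟩
  · have hroots := card_filter_aeval_eq_zero_lt hdeg hinj ha hdeg_a
    have hsplit := card_filter_add_card_filter_not (s := A) (fun α => aeval α a = 0)
    simp only [ne_eq]
    omega
  · obtain ⟨B, hBA, hB⟩ := exists_subset_card_eq (show k - 1 ≤ #A by omega)
    refine ⟨∏ β ∈ B, minpoly K β,
      prod_ne_zero_iff.mpr fun β _ => minpoly.ne_zero (Algebra.IsIntegral.isIntegral β), ?_, ?_⟩
    · rw [natDegree_prod_minpoly fun β hβ => hdeg β (hBA hβ), hB]
      exact Nat.mul_lt_mul_of_pos_left (by omega) hs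
    · rw [filter_aeval_prod_minpoly_ne_zero hBA hinj, card_sdiff_of_subset hBA, hB]
      omega

/-- Evaluation of polynomials of degree `< sk` at a set `A ⊆ F_{q^s}` of elements
of degree exactly `s` over `F_q` with pairwise distinct minimal polynomials gives
an `F_q`-linear MDS code: it has `q^{sk}` codewords and its minimum Hamming
distance is `|A| - k + 1`. -/
theorem stmt_14 (K L : Type*) [Field K] [Fintype K] [Field L] [Fintype L] [Algebra K L]
    [DecidableEq L] (s k : ℕ) (hs : 1 ≤ s) (hdim : Module.finrank K L = s)
    (A : Finset L) (hdeg : ∀ α ∈ A, (minpoly K α).natDegree = s)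
    (hdist : ∀ α ∈ A, ∀ β ∈ A, α ≠ β → minpoly K α ≠ minpoly K β)
    (hk : 1 ≤ k) (hkA : k < A.card) :
    Nat.card {v : A → L // ∃ a : Polynomial K, a.natDegree < s * k ∧
        ∀ α : A, v α = Polynomial.aeval (α : L) a} = Fintype.card K ^ (s * k) ∧
    (∀ a : Polynomial K, a ≠ 0 → a.natDegree < s * k →
        A.card - k + 1 ≤ (A.filter fun α => Polynomial.aeval α a ≠ 0).card) ∧
    (∃ a : Polynomial K, a ≠ 0 ∧ a.natDegree < s * k ∧
        (A.filter fun α => Polynomial.aeval α a ≠ 0).card = A.card - k + 1) :=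
  stmt_14_general K L s k A hdeg hdist hk hkA
end

section
/- Let q = q_0^r, let T be a subgroup of F_{q_0}^*, let ρ ∈ Aut(F_q) with fixed field F_{q_0}, and let A ⊆ F_{q^s} be a finite set of elements of degree exactly s over F_q with pairwise distinct minimal polynomials, such that for each α ∈ A the quantity N_{F_q/F_{q_0}}((-1)^s p_α(0)) lies in T, where p_α is the minimal polynomial of α. Let 1 ≤ k < |A| and let η ∈ F_q satisfy N_{F_q/F_{q_0}}(η) ∉ (-1)^{skr}·T. Then every nonzero polynomial a(x) ∈ F_q[x] of degree at most sk whose coefficients satisfy a_{sk} = η·ρ(a_0) has at most k - 1 roots in A. -/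
/-!
If `a` had `k` roots in `A`, their minimal polynomials (pairwise coprime, each of degree `s`)
would multiply to a monic divisor `P` of `a` of degree `sk ≥ deg a`, so `a = a_{sk} P`.
The twist condition then reads `a_{sk} = η ρ(a_{sk}) ρ(P(0))`; taking norms down to `F_{q_0}`,
where `ρ` is invisible, gives `N(η) N(P(0)) = 1`. Writing `P(0)` as `(-1)^{sk}` times the product
of the `(-1)^s p_α(0)`, whose norms lie in `T`, puts `N(η)` in `(-1)^{skr} T`.
-/

open Polynomial

section Norm

variable {K0 K : Type*} [Field K0] [Field K] [Algebra K0 K]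

lemma Algebra.norm_neg_one_pow (n : ℕ) :
    Algebra.norm K0 ((-1 : K) ^ n) = (-1) ^ (n * Module.finrank K0 K) := by
  rw [← map_one (algebraMap K0 K), ← map_neg, ← map_pow, Algebra.norm_algebraMap, ← pow_mul]

lemma Algebra.norm_mul_norm_eq_one_of_eq_mul_map (ρ : K ≃ₐ[K0] K) {c η b : K} (hc : c ≠ 0)
    (h : c = η * ρ (c * b)) : Algebra.norm K0 η * Algebra.norm K0 b = 1 := by
  have hnorm := congrArg (Algebra.norm K0) h
  rw [map_mul, Algebra.norm_eq_of_algEquiv, map_mul] at hnorm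
  refine mul_left_cancel₀ ((IsUnit.mk0 c hc).map (Algebra.norm K0)).ne_zero ?_
  linear_combination -hnorm

lemma Algebra.exists_mem_norm_prod_eq {ι : Type*} (T : Subgroup K0ˣ) (R : Finset ι)
    (f : ι → K) (s : ℕ)
    (hf : ∀ i ∈ R, ∃ u ∈ T, (u : K0) = Algebra.norm K0 ((-1 : K) ^ s * f i)) :
    ∃ u ∈ T, Algebra.norm K0 (∏ i ∈ R, f i) =
      (-1) ^ (s * R.card * Module.finrank K0 K) * (u : K0) := by
  obtain ⟨u, hu, hu_eq⟩ := Submonoid.mem_map.1 <|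
    Submonoid.prod_mem (T.toSubmonoid.map (Units.coeHom K0)) fun i hi =>
      Submonoid.mem_map.2 (hf i hi)
  refine ⟨u, hu, ?_⟩
  have hsign : ((-1 : K) ^ (s * R.card)) * (-1) ^ (s * R.card) = 1 := by
    rw [← mul_pow, neg_one_mul, neg_neg, one_pow]
  rw [Units.coeHom_apply] at hu_eq
  rw [hu_eq, ← map_prod, ← Algebra.norm_neg_one_pow, ← map_mul, Finset.prod_mul_distrib,
    Finset.prod_const, ← pow_mul, ← mul_assoc, hsign, one_mul]

lemma Algebra.norm_mul_norm_coeff_zero_eq_one (ρ : K ≃ₐ[K0] K) {η : K} {a P : K[X]}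
    (hP : P.Monic) (hPa : P ∣ a) (ha : a ≠ 0) (hdeg : a.natDegree ≤ P.natDegree)
    (htwist : a.coeff P.natDegree = η * ρ (a.coeff 0)) :
    Algebra.norm K0 η * Algebra.norm K0 (P.coeff 0) = 1 := by
  have haP := eq_leadingCoeff_mul_of_monic_of_dvd_of_natDegree_le hP hPa hdeg
  rw [haP, coeff_C_mul, coeff_C_mul, hP.coeff_natDegree, mul_one] at htwist
  exact Algebra.norm_mul_norm_eq_one_of_eq_mul_map ρ (leadingCoeff_ne_zero.2 ha) htwist

end Norm

section Minpoly

variable {K L : Type*} [Field K] [Field L] [Algebra K L]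

lemma minpoly.isCoprime_of_ne {α β : L} (hα : IsIntegral K α) (hβ : IsIntegral K β)
    (hne : minpoly K α ≠ minpoly K β) : IsCoprime (minpoly K α) (minpoly K β) :=
  (minpoly.irreducible hα).coprime_iff_not_dvd.2 fun h => hne <|
    eq_of_monic_of_associated (minpoly.monic hα) (minpoly.monic hβ)
      ((minpoly.irreducible hα).associated_of_dvd (minpoly.irreducible hβ) h)

lemma prod_minpoly_dvd_of_aeval_eq_zero {R : Finset L}
    (hR : Set.InjOn (minpoly K) (R : Set L)) {a : K[X]} (ha : a ≠ 0)
    (hroot : ∀ α ∈ R, aeval α a = 0) :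
    ∏ α ∈ R, minpoly K α ∣ a := by
  have hint : ∀ α ∈ R, IsIntegral K α := fun α hα =>
    IsAlgebraic.isIntegral ⟨a, ha, hroot α hα⟩
  refine Finset.prod_dvd_of_coprime (fun α hα β hβ hne => ?_) fun α hα =>
    minpoly.dvd K α (hroot α hα)
  exact minpoly.isCoprime_of_ne (hint α hα) (hint β hβ) fun h => hne (hR hα hβ h)

end Minpoly

theorem stmt_15_general (K0 K L : Type*) [Field K0] [Field K] [Field L] [Algebra K0 K] [Algebra K L]
    [DecidableEq L] (s k : ℕ) (T : Subgroup K0ˣ)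
    (ρ : K ≃+* K) (hρ : ∀ x : K, ρ x = x ↔ ∃ y : K0, algebraMap K0 K y = x)
    (A : Finset L) (hdeg : ∀ α ∈ A, (minpoly K α).natDegree = s)
    (hdist : ∀ α ∈ A, ∀ β ∈ A, α ≠ β → minpoly K α ≠ minpoly K β)
    (hT : ∀ α ∈ A, ∃ u ∈ T, ((u : K0ˣ) : K0) =
        Algebra.norm K0 ((-1 : K) ^ s * (minpoly K α).coeff 0))
    (η : K)
    (hη : ¬ ∃ u ∈ T, Algebra.norm K0 η =
        (-1 : K0) ^ (s * k * Module.finrank K0 K) * ((u : K0ˣ) : K0))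
    (a : Polynomial K) (ha : a ≠ 0) (hda : a.natDegree ≤ s * k)
    (htwist : a.coeff (s * k) = η * ρ (a.coeff 0)) :
    (A.filter fun α => Polynomial.aeval α a = 0).card ≤ k - 1 := by
  by_contra hcon
  obtain ⟨R, hRroots, hRk⟩ :=
    Finset.exists_subset_card_eq (s := A.filter fun α => aeval α a = 0) (n := k) (by omega)
  have hRA : R ⊆ A := hRroots.trans (Finset.filter_subset _ _)
  have hroot : ∀ α ∈ R, aeval α a = 0 := fun α hα => (Finset.mem_filter.1 (hRroots hα)).2
  have hmonic : ∀ α ∈ R, (minpoly K α).Monic := fun α hα =>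
    minpoly.monic (IsAlgebraic.isIntegral ⟨a, ha, hroot α hα⟩)
  have hPdeg : (∏ α ∈ R, minpoly K α).natDegree = s * k := by
    rw [natDegree_prod_of_monic _ _ hmonic, Finset.sum_congr rfl fun α hα => hdeg α (hRA hα),
      Finset.sum_const, smul_eq_mul, hRk, mul_comm]
  have hPdvd : ∏ α ∈ R, minpoly K α ∣ a := prod_minpoly_dvd_of_aeval_eq_zero
    (fun α hα β hβ h => not_imp_not.1 (hdist α (hRA hα) β (hRA hβ)) h) ha hroot
  let σ : K ≃ₐ[K0] K := AlgEquiv.ofRingEquiv (f := ρ) fun y => (hρ _).2 ⟨y, rfl⟩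
  have hnorm := Algebra.norm_mul_norm_coeff_zero_eq_one σ (monic_prod_of_monic _ _ hmonic)
    hPdvd ha (hPdeg ▸ hda) (hPdeg ▸ htwist)
  obtain ⟨u, hu, hPu⟩ :=
    Algebra.exists_mem_norm_prod_eq T R (fun α => (minpoly K α).coeff 0) s fun α hα =>
      hT α (hRA hα)
  rw [coeff_zero_prod, hPu, hRk] at hnorm
  refine hη ⟨u⁻¹, T.inv_mem hu, ?_⟩
  rw [eq_inv_of_mul_eq_one_left hnorm, mul_inv, ← inv_pow, inv_neg_one,
    Units.val_inv_eq_inv_val]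

/-- Twisted evaluation codes: if `η ∈ F_q` has `N_{F_q/F_{q_0}}(η) ∉ (-1)^{skr}·T`,
then every nonzero `a ∈ F_q[x]` of degree at most `sk` with `a_{sk} = η·ρ(a_0)`
has at most `k - 1` roots in `A`, where `A ⊆ F_{q^s}` consists of elements of
degree exactly `s` over `F_q` with pairwise distinct minimal polynomials `p_α`
satisfying `N_{F_q/F_{q_0}}((-1)^s p_α(0)) ∈ T`. -/
theorem stmt_15 (K0 K L : Type*) [Field K0] [Fintype K0] [Field K] [Fintype K]
    [Field L] [Fintype L] [Algebra K0 K] [Algebra K L] [DecidableEq L]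
    (s k : ℕ) (hs : 1 ≤ s) (hk : 1 ≤ k) (hdim : Module.finrank K L = s)
    (T : Subgroup K0ˣ)
    (ρ : K ≃+* K) (hρ : ∀ x : K, ρ x = x ↔ ∃ y : K0, algebraMap K0 K y = x)
    (A : Finset L) (hdeg : ∀ α ∈ A, (minpoly K α).natDegree = s)
    (hdist : ∀ α ∈ A, ∀ β ∈ A, α ≠ β → minpoly K α ≠ minpoly K β)
    (hT : ∀ α ∈ A, ∃ u ∈ T, ((u : K0ˣ) : K0) =
        Algebra.norm K0 ((-1 : K) ^ s * (minpoly K α).coeff 0))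
    (hkA : k < A.card)
    (η : K)
    (hη : ¬ ∃ u ∈ T, Algebra.norm K0 η =
        (-1 : K0) ^ (s * k * Module.finrank K0 K) * ((u : K0ˣ) : K0))
    (a : Polynomial K) (ha : a ≠ 0) (hda : a.natDegree ≤ s * k)
    (htwist : a.coeff (s * k) = η * ρ (a.coeff 0)) :
    (A.filter fun α => Polynomial.aeval α a = 0).card ≤ k - 1 :=
  stmt_15_general K0 K L s k T ρ hρ A hdeg hdist hT η hη a ha hda htwist
end
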